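/- arXiv:2406.01398 — 6 statements merged into one kernel-verified Lean document; each statement's English description precedes it below -/
import Mathlib

section
/- If a student reports a monotonic transformation of her true preferences at her DA assignment (i.e., the set of schools she ranks above her assigned school weakly shrinks) and her DA assignment is unchanged, then the new DA matching weakly Pareto dominates the old one with respect to the true profile: every student who changes assignment strictly prefers her new assignment. -/
/-- A preference profile: each student has a (strict) preference relation over
`Option S`, where `none` is the outside option `s₀` and `some s` is school `s`. -/
abbrev Profile (N S : Type*) := N → Option S → Option S → Prop

/-- A school choice context: strict priorities and capacities for each school. -/
structure SchoolContext (N S : Type*) where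
  prio : S → N → N → Prop
  prio_sto : ∀ s, IsStrictTotalOrder N (prio s)
  cap : S → ℕ
  cap_pos : ∀ s, 1 ≤ cap s

/-- Well-formedness of a profile: each student's preference is a strict linear order. -/
def ProfWF {N S : Type*} (P : Profile N S) : Prop :=
  ∀ i, IsStrictTotalOrder (Option S) (P i)

/-- Feasibility of an assignment: capacities are respected. -/
def Feasible {N S : Type*} (C : SchoolContext N S) (μ : N → Option S) : Prop :=
  ∀ s : S, {i | μ i = some s}.ncard ≤ C.cap s

/-- Individual rationality: no student prefers the outside option to her assignment. -/
def IndRat {N S : Type*} (P : Profile N S) (μ : N → Option S) : Prop :=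
  ∀ i, ¬ P i none (μ i)

/-- Non-wastefulness: no student prefers a school with an unfilled seat. -/
def NonWasteful {N S : Type*} (C : SchoolContext N S) (P : Profile N S)
    (μ : N → Option S) : Prop :=
  ∀ i (s : S), P i (some s) (μ i) → C.cap s ≤ {j | μ j = some s}.ncard

/-- No justified envy. -/
def NoJustifiedEnvy {N S : Type*} (C : SchoolContext N S) (P : Profile N S)
    (μ : N → Option S) : Prop :=
  ∀ i j (s : S), P i (some s) (μ i) → μ j = some s → ¬ C.prio s i j

/-- Stability of a matching. -/
def IsStable {N S : Type*} (C : SchoolContext N S) (P : Profile N S)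
    (μ : N → Option S) : Prop :=
  Feasible C μ ∧ IndRat P μ ∧ NonWasteful C P μ ∧ NoJustifiedEnvy C P μ

/-!
Since the set of options student `i` ranks above `DA P i` only shrinks, and she still does not
rank the outside option above it (her new DA assignment is the same school), the old matching
`DA P` remains stable under the new profile. Student-optimality of `DA` under the new profile
then says nobody prefers her old assignment to her new one, which for a student other than `i`
is a statement about her true preferences.
-/

theorem IsStable.of_forall_prefers_imp {N S : Type*} {C : SchoolContext N S} {P Q : Profile N S}
    {μ : N → Option S} (hμ : IsStable C P μ) (hQP : ∀ j o, Q j o (μ j) → P j o (μ j)) :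
    IsStable C Q μ := by
  obtain ⟨hF, hIR, hNW, hNJE⟩ := hμ
  exact ⟨hF, fun j h => hIR j (hQP j none h), fun j s h => hNW j s (hQP j _ h),
    fun j k s h => hNJE j k s (hQP j _ h)⟩

theorem stmt5_general {N S : Type*} [DecidableEq N] (C : SchoolContext N S)
    (DA : Profile N S → (N → Option S))
    (hDAstable : ∀ P, ProfWF P → IsStable C P (DA P))
    (hDAopt : ∀ P, ProfWF P → ∀ μ, IsStable C P μ → ∀ i, ¬ P i (μ i) (DA P i))
    (i : N) (P : Profile N S) (P'i : Option S → Option S → Prop)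
    (hP : ProfWF P) (hP' : ProfWF (Function.update P i P'i))
    (hmono : ∀ s : S, P'i (some s) (DA P i) → P i (some s) (DA P i))
    (hsame : DA (Function.update P i P'i) i = DA P i) :
    ∀ j, DA (Function.update P i P'i) j ≠ DA P j →
      P j (DA (Function.update P i P'i) j) (DA P j) := by
  have hupper : ∀ j o, Function.update P i P'i j o (DA P j) → P j o (DA P j) := by
    intro j o
    rcases eq_or_ne j i with rfl | hji
    · rw [Function.update_self]
      cases o with
      | none =>
        intro h
        exact ((hDAstable _ hP').2.1 j (by rwa [Function.update_self, hsame])).elim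
      | some s => exact hmono s
    · rw [Function.update_of_ne hji]
      exact id
  have hopt := hDAopt _ hP' (DA P) ((hDAstable P hP).of_forall_prefers_imp hupper)
  intro j hne
  have hji : j ≠ i := by
    rintro rfl
    exact hne hsame
  by_contra hworse
  exact hne ((hP j).trichotomous _ _ hworse (Function.update_of_ne hji P'i P ▸ hopt j))

/-- If a student reports a monotonic transformation of her true preferences at her DA
assignment and her DA assignment is unchanged, then the new DA matching weakly Pareto
dominates the old one under the true profile: every student whose assignment changes
strictly prefers her new assignment. -/
theorem stmt5 {N S : Type*} [Finite N] [DecidableEq N] (C : SchoolContext N S)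
    (DA : Profile N S → (N → Option S))
    (hDAstable : ∀ P, ProfWF P → IsStable C P (DA P))
    (hDAopt : ∀ P, ProfWF P → ∀ μ, IsStable C P μ → ∀ i, ¬ P i (μ i) (DA P i))
    (i : N) (P : Profile N S) (P'i : Option S → Option S → Prop)
    (hP : ProfWF P) (hP' : ProfWF (Function.update P i P'i))
    (hmono : ∀ s : S, P'i (some s) (DA P i) → P i (some s) (DA P i))
    (hsame : DA (Function.update P i P'i) i = DA P i) :
    ∀ j, DA (Function.update P i P'i) j ≠ DA P j →
      P j (DA (Function.update P i P'i) j) (DA P j) :=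
  stmt5_general C DA hDAstable hDAopt i P P'i hP hP' hmono hsame
end

section
/- On the domain of school-lexicographic preferences over colleagues, the mechanism induced by student-proposing deferred acceptance applied to induced school preferences is the unique stable and strategy-proof mechanism. -/
/-- Strict part of a (weak) preference relation. -/
def StrictlyPref {α : Type*} (r : α → α → Prop) (a b : α) : Prop := r a b ∧ ¬ r b a

/-- `(pref, P)` is a profile of school-lexicographic preferences over colleagues, with
`P` the induced profile of preferences over schools: each `pref i` is a complete and
transitive preference over (feasible) matchings; matchings giving `i` different schools
are strictly ranked according to `P i`; and `i` is indifferent between matchings giving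
her the same school and the same set of schoolmates. -/
def SLCprofile {N S : Type*} (C : SchoolContext N S)
    (pref : N → (N → Option S) → (N → Option S) → Prop) (P : Profile N S) : Prop :=
  ProfWF P ∧
  (∀ i (μ η θ : N → Option S), Feasible C μ → Feasible C η → Feasible C θ →
      pref i μ η → pref i η θ → pref i μ θ) ∧
  (∀ i (μ η : N → Option S), Feasible C μ → Feasible C η → (pref i μ η ∨ pref i η μ)) ∧
  (∀ i (μ η : N → Option S), Feasible C μ → Feasible C η → μ i ≠ η i →
      (StrictlyPref (pref i) μ η ↔ P i (μ i) (η i))) ∧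
  (∀ i (μ η : N → Option S) (s : Option S), Feasible C μ → Feasible C η →
      StrictlyPref (pref i) μ η → μ i = s → η i = s → {j | μ j = s} ≠ {j | η j = s})

/-!
If a stable mechanism `Γ` gave some student `i` a school other than her DA school `t`, she would
strictly prefer `t`. Let her instead report a preference that cares only about her own school and
ranks `t` first and the outside option second. The DA matching stays stable under the new report,
so by the rural hospital theorem `i` is matched in every stable matching of the new profile; being
matched and individually rational under the new report means being matched to `t`. Thus `Γ` gives
her `t` after the misreport, contradicting strategy-proofness.
-/

open Function

theorem ncard_fiber_eq_of_forall_ncard_fiber_le {α β : Type*} [Finite α] {f g : α → β}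
    (h : ∀ b, {a | f a = b}.ncard ≤ {a | g a = b}.ncard) (b : β) :
    {a | f a = b}.ncard = {a | g a = b}.ncard := by
  classical
  have := Fintype.ofFinite α
  simp only [Set.ncard_eq_toFinset_card', Set.toFinset_ofPred] at h ⊢
  set T := Finset.univ.image f ∪ Finset.univ.image g
  have hsum : ∀ φ : α → β, (∀ a, φ a ∈ T) →
      ∑ c ∈ T, (Finset.univ.filter (φ · = c)).card = Fintype.card α := fun φ hφ =>
    (Finset.card_eq_sum_card_fiberwise fun a _ => hφ a).symm
  by_cases hb : b ∈ T
  · refine (Finset.sum_eq_sum_iff_of_le fun c _ => h c).1 ?_ b hb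
    rw [hsum f (by simp [T]), hsum g (by simp [T])]
  · simp only [T, Finset.mem_union, Finset.mem_image, Finset.mem_univ, true_and, not_or,
      not_exists] at hb
    simp [hb.1, hb.2]

instance Prod.Lex.isStrictTotalOrder {α β : Type*} {r : α → α → Prop} {s : β → β → Prop}
    [IsStrictTotalOrder α r] [IsStrictTotalOrder β s] :
    IsStrictTotalOrder (α × β) (Prod.Lex r s) where

section Stability

variable {N S : Type*} {C : SchoolContext N S} {P : Profile N S} {μ ν : N → Option S}

theorem ProfWF.rel_of_not_rel (hP : ProfWF P) {i : N} {a b : Option S} (h : ¬ P i a b)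
    (hne : a ≠ b) : P i b a := by
  have := hP i
  exact ((trichotomous_of (P i) a b).resolve_left h).resolve_left hne

theorem ncard_fiber_some_le_of_nonWasteful [Finite N] (hP : ProfWF P) (hμ : NonWasteful C P μ)
    (hν : Feasible C ν) (hdom : ∀ j, ¬ P j (μ j) (ν j)) (s : S) :
    {j | ν j = some s}.ncard ≤ {j | μ j = some s}.ncard := by
  by_contra! hlt
  obtain ⟨j, hνj, hμj⟩ := Set.exists_mem_notMem_of_ncard_lt_ncard hlt
  have hpref : P j (some s) (μ j) :=
    hνj ▸ hP.rel_of_not_rel (hdom j) fun h => hμj (h.trans hνj)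
  exact hlt.not_ge ((hν s).trans (hμ j s hpref))

theorem unmatched_eq_of_forall_not_pref [Finite N] (hP : ProfWF P) (hIR : IndRat P μ)
    (hNW : NonWasteful C P μ) (hν : Feasible C ν) (hdom : ∀ j, ¬ P j (μ j) (ν j)) :
    {j | ν j = none} = {j | μ j = none} := by
  have hsub : {j | ν j = none} ⊆ {j | μ j = none} := by
    intro j (hj : ν j = none)
    by_contra hμj
    exact hIR j (hj ▸ hP.rel_of_not_rel (hdom j) (by rwa [hj]))
  have hfiber : ∀ x, {j | ν j = x}.ncard ≤ {j | μ j = x}.ncard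
    | none => Set.ncard_le_ncard hsub
    | some s => ncard_fiber_some_le_of_nonWasteful hP hNW hν hdom s
  exact Set.eq_of_subset_of_ncard_le hsub (ncard_fiber_eq_of_forall_ncard_fiber_le hfiber none).ge

/-- The rural hospital theorem. -/
theorem unmatched_eq_of_isStable [Finite N] (hP : ProfWF P) {κ : N → Option S}
    (hκ : Feasible C κ) (hopt : ∀ μ, IsStable C P μ → ∀ j, ¬ P j (μ j) (κ j))
    (hμ : IsStable C P μ) (hν : IsStable C P ν) :
    {j | μ j = none} = {j | ν j = none} :=
  (unmatched_eq_of_forall_not_pref hP hμ.2.1 hμ.2.2.1 hκ (hopt μ hμ)).symm.trans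
    (unmatched_eq_of_forall_not_pref hP hν.2.1 hν.2.2.1 hκ (hopt ν hν))

theorem IsStable.update [DecidableEq N] (hμ : IsStable C P μ) {i : N}
    {R : Option S → Option S → Prop} (htop : ∀ x, ¬ R x (μ i)) :
    IsStable C (update P i R) μ := by
  obtain ⟨hF, hIR, hNW, hNJE⟩ := hμ
  refine ⟨hF, fun j => ?_, fun j s => ?_, fun j k s => ?_⟩ <;>
    rcases eq_or_ne j i with rfl | hj
  · simpa only [update_self] using htop none
  · simpa only [update_of_ne hj] using hIR j
  · simpa only [update_self] using fun h => absurd h (htop _)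
  · simpa only [update_of_ne hj] using hNW j s
  · simpa only [update_self] using fun h => absurd h (htop _)
  · simpa only [update_of_ne hj] using hNJE j k s

end Stability

section Truncation

variable {S : Type*}

open Classical in
noncomputable def truncRank (t : S) (a : Option S) : ℕ :=
  if a = some t then 0 else if a = none then 1 else 2

/-- The preference that ranks `t` first, the outside option second and the remaining schools
as `R` does. -/
def truncate (t : S) (R : Option S → Option S → Prop) : Option S → Option S → Prop :=
  Prod.Lex (· < ·) R on fun a => (truncRank t a, a)

variable {t : S} {R : Option S → Option S → Prop}

instance [IsStrictTotalOrder (Option S) R] : IsStrictTotalOrder (Option S) (truncate t R) :=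
  Injective.isStrictTotalOrder_onFun (Prod.Lex (· < ·) R) fun _ _ h => congrArg Prod.snd h

theorem not_truncate_some_self [Std.Irrefl R] (a : Option S) : ¬ truncate t R a (some t) := by
  by_cases ha : a = some t
  · subst ha
    exact irrefl (r := Prod.Lex (· < ·) R) _
  · simp only [truncate, onFun, Prod.lex_def, truncRank, ha, if_true, if_false]
    split_ifs <;> simp

theorem truncate_none_some {s : S} (hs : s ≠ t) : truncate t R none (some s) :=
  Prod.Lex.left _ _ (by simp [truncRank, hs])

theorem IndRat.eq_some_of_truncate {N : Type*} [DecidableEq N] {μ : N → Option S} {i : N}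
    {P : Profile N S} (h : IndRat (update P i (truncate t R)) μ) (hi : μ i ≠ none) :
    μ i = some t := by
  obtain ⟨s, hs⟩ := Option.ne_none_iff_exists'.1 hi
  have hIR := h i
  rw [update_self, hs] at hIR
  rw [hs]
  by_contra hst
  exact hIR (truncate_none_some fun h => hst (h ▸ rfl))

end Truncation

section SchoolLexicographic

variable {N S : Type*} {C : SchoolContext N S}

def IsSLCPref (C : SchoolContext N S) (i : N) (r : (N → Option S) → (N → Option S) → Prop)
    (R : Option S → Option S → Prop) : Prop :=
  IsStrictTotalOrder (Option S) R ∧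
  (∀ μ η θ : N → Option S, Feasible C μ → Feasible C η → Feasible C θ →
      r μ η → r η θ → r μ θ) ∧
  (∀ μ η : N → Option S, Feasible C μ → Feasible C η → (r μ η ∨ r η μ)) ∧
  (∀ μ η : N → Option S, Feasible C μ → Feasible C η → μ i ≠ η i →
      (StrictlyPref r μ η ↔ R (μ i) (η i))) ∧
  (∀ (μ η : N → Option S) (s : Option S), Feasible C μ → Feasible C η →
      StrictlyPref r μ η → μ i = s → η i = s → {j | μ j = s} ≠ {j | η j = s})

theorem slcprofile_iff {pref : N → (N → Option S) → (N → Option S) → Prop} {P : Profile N S} :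
    SLCprofile C pref P ↔ ∀ i, IsSLCPref C i (pref i) (P i) := by
  simp only [SLCprofile, IsSLCPref, ProfWF, forall_and]

def schoolPref (i : N) (R : Option S → Option S → Prop) :
    (N → Option S) → (N → Option S) → Prop :=
  fun μ η => ¬ R (η i) (μ i)

theorem isSLCPref_schoolPref {i : N} {R : Option S → Option S → Prop}
    [IsStrictTotalOrder (Option S) R] : IsSLCPref C i (schoolPref i R) R := by
  refine ⟨inferInstance, fun μ η θ _ _ _ h₁ h₂ => IsOrderConnected.neg_trans h₂ h₁,
    fun μ η _ _ => ?_, fun μ η _ _ _ => ?_, fun μ η s _ _ h hμ hη => ?_⟩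
  · by_cases h : R (η i) (μ i)
    · exact Or.inr (asymm h)
    · exact Or.inl h
  · exact ⟨fun h => not_not.1 h.2, fun h => ⟨asymm h, not_not_intro h⟩⟩
  · exact absurd (hμ ▸ hη ▸ not_not.1 h.2) (irrefl s)

theorem SLCprofile.update [DecidableEq N] {pref : N → (N → Option S) → (N → Option S) → Prop}
    {P : Profile N S} (h : SLCprofile C pref P) {i : N}
    {r : (N → Option S) → (N → Option S) → Prop} {R : Option S → Option S → Prop}
    (hi : IsSLCPref C i r R) : SLCprofile C (update pref i r) (update P i R) := by
  rw [slcprofile_iff] at h ⊢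
  intro j
  rcases eq_or_ne j i with rfl | hj
  · simpa only [update_self] using hi
  · simpa only [update_of_ne hj] using h j

end SchoolLexicographic

/-- On the domain of school-lexicographic preferences over colleagues, the mechanism
induced by deferred acceptance applied to induced school preferences is the unique
stable and strategy-proof mechanism. -/
theorem stmt7 {N S : Type*} [Finite N] [DecidableEq N] (C : SchoolContext N S)
    (DA : Profile N S → (N → Option S))
    (hDAstable : ∀ P, ProfWF P → IsStable C P (DA P))
    (hDAopt : ∀ P, ProfWF P → ∀ μ, IsStable C P μ → ∀ i, ¬ P i (μ i) (DA P i))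
    (Γ : (N → (N → Option S) → (N → Option S) → Prop) → (N → Option S))
    (hΓstable : ∀ pref P, SLCprofile C pref P → IsStable C P (Γ pref))
    (hΓSP : ∀ (i : N) (pref : N → (N → Option S) → (N → Option S) → Prop)
        (P : Profile N S) (pref' : N → (N → Option S) → (N → Option S) → Prop)
        (P' : Profile N S),
        SLCprofile C pref P → SLCprofile C pref' P' →
        (∀ j, j ≠ i → pref' j = pref j ∧ P' j = P j) →
        ¬ StrictlyPref (pref i) (Γ pref') (Γ pref)) :
    ∀ pref P, SLCprofile C pref P → Γ pref = DA P := by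
  intro pref P hSLC
  funext i
  by_contra hne
  have hWF : ProfWF P := hSLC.1
  have hΓ : IsStable C P (Γ pref) := hΓstable pref P hSLC
  have hbetter : P i (DA P i) (Γ pref i) :=
    hWF.rel_of_not_rel (hDAopt P hWF _ hΓ i) hne
  obtain ⟨t, ht⟩ : ∃ t, DA P i = some t :=
    Option.ne_none_iff_exists'.1 fun h => hΓ.2.1 i (h ▸ hbetter)
  have : IsStrictTotalOrder (Option S) (P i) := hWF i
  set pref' := update pref i (schoolPref i (truncate t (P i)))
  set P' := update P i (truncate t (P i))
  have hSLC' : SLCprofile C pref' P' := hSLC.update isSLCPref_schoolPref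
  have hΓ' : IsStable C P' (Γ pref') := hΓstable pref' P' hSLC'
  have hDA' : IsStable C P' (DA P) :=
    (hDAstable P hWF).update (ht ▸ not_truncate_some_self)
  have hmatched : Γ pref' i ≠ none := by
    have hunmatched := unmatched_eq_of_isStable hSLC'.1 (hDAstable P' hSLC'.1).1
      (hDAopt P' hSLC'.1) hΓ' hDA'
    exact fun h => Option.some_ne_none t (ht ▸ (Set.ext_iff.1 hunmatched i).1 h)
  have hΓ'i : Γ pref' i = some t := hΓ'.2.1.eq_some_of_truncate hmatched
  refine hΓSP i pref P pref' P' hSLC hSLC'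
    (fun j hj => ⟨update_of_ne hj _ _, update_of_ne hj _ _⟩) ?_
  rw [← ht] at hΓ'i
  refine (hSLC.2.2.2.1 i _ _ hΓ'.1 hΓ.1 ?_).2 ?_ <;> rw [hΓ'i]
  exacts [Ne.symm hne, hbetter]
end

section
/- If a variable-population mechanism Φ is individually rational, weakly non-wasteful, and population-monotonic, then each school's induced choice function is substitutable: if i ∈ N ⊆ N' and i is chosen from N', then i is chosen from N. -/
/-- Feasibility with respect to capacities `q`. -/
def FeasibleQ {NN S : Type*} (q : S → ℕ) (μ : NN → Option S) : Prop :=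
  ∀ s : S, {i | μ i = some s}.ncard ≤ q s

/-- Students outside the present population are unassigned. -/
def VOutside {NN S : Type*} (Φ : Finset NN → Profile NN S → (NN → Option S)) : Prop :=
  ∀ (Nf : Finset NN) (P : Profile NN S) (i : NN), i ∉ Nf → Φ Nf P i = none

/-- The mechanism always outputs feasible matchings. -/
def VFeasible {NN S : Type*} (q : S → ℕ)
    (Φ : Finset NN → Profile NN S → (NN → Option S)) : Prop :=
  ∀ (Nf : Finset NN) (P : Profile NN S), ProfWF P → FeasibleQ q (Φ Nf P)

/-- Two preference relations have the same ranking of admissible schools. -/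
def TruncEq {S : Type*} (p p' : Option S → Option S → Prop) : Prop :=
  (∀ s : S, p (some s) none ↔ p' (some s) none) ∧
  (∀ s s' : S, p (some s) none → p (some s') none →
      (p (some s) (some s') ↔ p' (some s) (some s')))

/-- The mechanism depends only on students' rankings of admissible schools. -/
def VInvariant {NN S : Type*} (Φ : Finset NN → Profile NN S → (NN → Option S)) : Prop :=
  ∀ (Nf : Finset NN) (P P' : Profile NN S), ProfWF P → ProfWF P' →
    (∀ i ∈ Nf, TruncEq (P i) (P' i)) → Φ Nf P = Φ Nf P'

/-- Individual rationality. -/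
def VIndRat {NN S : Type*} (Φ : Finset NN → Profile NN S → (NN → Option S)) : Prop :=
  ∀ (Nf : Finset NN) (P : Profile NN S), ProfWF P → ∀ i, ¬ P i none (Φ Nf P i)

/-- Weak non-wastefulness: an unassigned student never prefers a school with empty seats. -/
def VWNW {NN S : Type*} (q : S → ℕ)
    (Φ : Finset NN → Profile NN S → (NN → Option S)) : Prop :=
  ∀ (Nf : Finset NN) (P : Profile NN S), ProfWF P → ∀ i ∈ Nf, ∀ s : S,
    Φ Nf P i = none → P i (some s) none → q s ≤ {j | Φ Nf P j = some s}.ncard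

/-- Population-monotonicity. -/
def VPopMono {NN S : Type*} (Φ : Finset NN → Profile NN S → (NN → Option S)) : Prop :=
  ∀ (Nf Nf' : Finset NN), Nf ⊆ Nf' → ∀ (P : Profile NN S), ProfWF P →
    ∀ i ∈ Nf, ¬ P i (Φ Nf' P i) (Φ Nf P i)

/-- Strategy-proofness. -/
def VSP {NN S : Type*} [DecidableEq NN]
    (Φ : Finset NN → Profile NN S → (NN → Option S)) : Prop :=
  ∀ (Nf : Finset NN) (P : Profile NN S), ProfWF P →
    ∀ (i : NN) (P'i : Option S → Option S → Prop),
      ProfWF (Function.update P i P'i) →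
      ¬ P i (Φ Nf (Function.update P i P'i) i) (Φ Nf P i)

/-- Weak local non-bossiness: restricted to real schools. -/
def VWLNB {NN S : Type*} [DecidableEq NN]
    (Φ : Finset NN → Profile NN S → (NN → Option S)) : Prop :=
  ∀ (Nf : Finset NN) (P : Profile NN S), ProfWF P →
    ∀ (i : NN) (P'i : Option S → Option S → Prop),
      ProfWF (Function.update P i P'i) → ∀ s : S,
      Φ Nf P i = some s → Φ Nf (Function.update P i P'i) i = some s →
      {j | Φ Nf P j = some s} = {j | Φ Nf (Function.update P i P'i) j = some s}

/-- Under `P` every student finds only school `s` admissible. -/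
def AdmOnly {NN S : Type*} (P : Profile NN S) (s : S) : Prop :=
  ∀ k, P k (some s) none ∧ ∀ s' : S, s' ≠ s → ¬ P k (some s') none

/-- The S-weaker axiom of revealed preference. -/
def SWrARP {NN S : Type*} (q : S → ℕ)
    (Φ : Finset NN → Profile NN S → (NN → Option S)) : Prop :=
  ∀ (s : S) (i j : NN) (Nf Nf' : Finset NN),
    i ∈ Nf → i ∈ Nf' → j ∈ Nf → j ∈ Nf' →
    Nf.card = q s + 1 → Nf'.card = q s + 1 →
    ∀ P : Profile NN S, ProfWF P → AdmOnly P s →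
      Φ Nf P i = some s → Φ Nf' P j = some s → Φ Nf P j ≠ some s →
      Φ Nf' P i = some s

/-- Stability of `μ` for the subpopulation `Nf`, priorities `pr`, capacities `q`. -/
def IsStableOn {NN S : Type*} (pr : S → NN → NN → Prop) (q : S → ℕ)
    (Nf : Finset NN) (P : Profile NN S) (μ : NN → Option S) : Prop :=
  (∀ i, i ∉ Nf → μ i = none) ∧ FeasibleQ q μ ∧
  (∀ i ∈ Nf, ¬ P i none (μ i)) ∧
  (∀ i ∈ Nf, ∀ s : S, P i (some s) (μ i) → q s ≤ {j | μ j = some s}.ncard) ∧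
  (∀ i ∈ Nf, ∀ j ∈ Nf, ∀ s : S, P i (some s) (μ i) → μ j = some s → ¬ pr s i j)

/-- `Φ` is the student-proposing deferred acceptance mechanism for priorities `pr`:
for every population and well-formed profile it outputs the student-optimal stable
matching of the restricted problem. -/
def IsDAFor {NN S : Type*} (pr : S → NN → NN → Prop) (q : S → ℕ)
    (Φ : Finset NN → Profile NN S → (NN → Option S)) : Prop :=
  ∀ (Nf : Finset NN) (P : Profile NN S), ProfWF P →
    IsStableOn pr q Nf P (Φ Nf P) ∧
    ∀ μ, IsStableOn pr q Nf P μ → ∀ i ∈ Nf, ¬ P i (μ i) (Φ Nf P i)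

theorem Option.eq_none_or_eq_some_of_not_rel_none {S : Type*} {p : Option S → Option S → Prop}
    [Std.Trichotomous p] {s : S} (honly : ∀ s' : S, s' ≠ s → ¬ p (some s') none)
    {x : Option S} (hx : ¬ p none x) : x = none ∨ x = some s := by
  rcases x with _ | s'
  · exact .inl rfl
  · right
    by_contra hne
    rcases trichotomous_of p (some s') none with h | h | h
    · exact honly s' (fun h' => hne (congrArg some h')) h
    · exact Option.some_ne_none s' h
    · exact hx h

theorem stmt11_general {NN S : Type*}
    (Φ : Finset NN → Profile NN S → (NN → Option S))
    (hIR : VIndRat Φ) (hPM : VPopMono Φ) :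
    ∀ (s : S) (P : Profile NN S), ProfWF P → AdmOnly P s →
      ∀ (Nf Nf' : Finset NN), Nf ⊆ Nf' → ∀ i ∈ Nf,
        Φ Nf' P i = some s → Φ Nf P i = some s := by
  intro s P hwf hadm Nf Nf' hsub i hi hi'
  have hnot_worse : ¬ P i (some s) (Φ Nf P i) := hi' ▸ hPM Nf Nf' hsub P hwf i hi
  have := hwf i
  rcases Option.eq_none_or_eq_some_of_not_rel_none (hadm i).2 (hIR Nf P hwf i) with hnone | hs
  · exact absurd (hnone ▸ (hadm i).1) hnot_worse
  · exact hs

/-- If a variable-population mechanism is individually rational, weakly non-wasteful,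
and population-monotonic, then each school's induced choice function is substitutable:
if `i ∈ Nf ⊆ Nf'` and `i` is chosen from `Nf'`, then `i` is chosen from `Nf`. -/
theorem stmt11 {NN S : Type*} [Finite NN] [DecidableEq NN]
    (q : S → ℕ) (hq : ∀ s, 1 ≤ q s)
    (Φ : Finset NN → Profile NN S → (NN → Option S))
    (hout : VOutside Φ) (hfeas : VFeasible q Φ)
    (hIR : VIndRat Φ) (hWNW : VWNW q Φ) (hPM : VPopMono Φ) :
    ∀ (s : S) (P : Profile NN S), ProfWF P → AdmOnly P s →
      ∀ (Nf Nf' : Finset NN), Nf ⊆ Nf' → ∀ i ∈ Nf,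
        Φ Nf' P i = some s → Φ Nf P i = some s :=
  stmt11_general Φ hIR hPM
end

section
/- Local non-bossiness and stability are independent properties of school choice mechanisms: there exists a stable mechanism that is not locally non-bossy (and not strategy-proof), obtained by overriding student-optimal DA with school-optimal DA at a single preference profile. -/
/-- Strategy-proofness of a mechanism. -/
def StrategyProof {N S : Type*} [DecidableEq N] (Φ : Profile N S → (N → Option S)) : Prop :=
  ∀ (P : Profile N S), ProfWF P → ∀ (i : N) (P'i : Option S → Option S → Prop),
    ProfWF (Function.update P i P'i) →
    ¬ P i (Φ (Function.update P i P'i) i) (Φ P i)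

/-- Local non-bossiness: a unilateral deviation that keeps the deviator's
assignment keeps the whole set of students assigned there. -/
def LocallyNonBossy {N S : Type*} [DecidableEq N] (Φ : Profile N S → (N → Option S)) : Prop :=
  ∀ (P : Profile N S), ProfWF P → ∀ (i : N) (P'i : Option S → Option S → Prop),
    ProfWF (Function.update P i P'i) → ∀ s : Option S,
    Φ P i = s → Φ (Function.update P i P'i) i = s →
    {j | Φ P j = s} = {j | Φ (Function.update P i P'i) j = s}

/-- Replace the preferences of the members of coalition `Cs` by `P'`. -/
def updateGroup {N S : Type*} (P : Profile N S) (Cs : Set N) (P' : Profile N S) :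
    Profile N S :=
  fun i a b => (i ∈ Cs ∧ P' i a b) ∨ (i ∉ Cs ∧ P i a b)

/-- Local group strategy-proofness: no coalition of schoolmates can jointly misreport so
that all are weakly better off and one strictly better off. -/
def LocallyGSP {N S : Type*} (Φ : Profile N S → (N → Option S)) : Prop :=
  ¬ ∃ (s : Option S) (P : Profile N S) (Cs : Set N) (P' : Profile N S),
      ProfWF P ∧ ProfWF (updateGroup P Cs P') ∧
      (∀ i ∈ Cs, Φ P i = s) ∧
      (∀ j ∈ Cs, ¬ P j (Φ P j) (Φ (updateGroup P Cs P') j)) ∧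
      (∃ i ∈ Cs, P i (Φ (updateGroup P Cs P') i) (Φ P i))

/-- Local group non-bossiness: if a coalition of schoolmates jointly misreports with each
member keeping her assignment, the set of students at their common school is unchanged. -/
def LocallyGroupNonBossy {N S : Type*} (Φ : Profile N S → (N → Option S)) : Prop :=
  ∀ (s : Option S) (P : Profile N S) (Cs : Set N) (P' : Profile N S),
    ProfWF P → ProfWF (updateGroup P Cs P') →
    (∀ i ∈ Cs, Φ P i = s) →
    (∀ i ∈ Cs, Φ (updateGroup P Cs P') i = Φ P i) →
    {j | Φ P j = s} = {j | Φ (updateGroup P Cs P') j = s}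

/-- Weak non-bossiness (Bando–Imamura): a unilateral deviation keeping the deviator's
assignment keeps the set of unassigned students. -/
def WeakNonBossy {N S : Type*} [DecidableEq N] (Φ : Profile N S → (N → Option S)) : Prop :=
  ∀ (P : Profile N S), ProfWF P → ∀ (i : N) (P'i : Option S → Option S → Prop),
    ProfWF (Function.update P i P'i) →
    Φ (Function.update P i P'i) i = Φ P i →
    {j | Φ P j = none} = {j | Φ (Function.update P i P'i) j = none}

/-! Stable matchings always exist: among fair matchings (feasible, individually rational, free of
justified envy) take one minimising the total rank students give their assignments. It is
non-wasteful, since admitting the highest-priority student who desires a school with a vacant seat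
keeps the matching fair and lowers the total rank.

Hence the mechanism that picks the school-optimal matching `(s₁, s₁, s₂)` at `P̄` and the
student-optimal one `(s₁, s₂, s₁)` wherever that is stable is a stable mechanism. If student 1
reports `s₂ ≻ s₁ ≻ s₀` she still gets `s₁`, but her schoolmate changes from 2 to 3; if student 2
reports `s₂ ≻ s₀ ≻ s₁` she moves from `s₁` up to `s₂`. -/

open Function

section Existence

variable {N S : Type*} (C : SchoolContext N S) (P : Profile N S)

def IsFair (μ : N → Option S) : Prop :=
  Feasible C μ ∧ IndRat P μ ∧ NoJustifiedEnvy C P μ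

lemma isFair_unassigned (hP : ProfWF P) : IsFair C P fun _ => none :=
  ⟨fun s => by simp, fun i => (hP i).irrefl none, fun _ _ _ _ hj => by simp at hj⟩

lemma ProfWF.update [DecidableEq N] {P : Profile N S} (hP : ProfWF P) (i : N)
    {R : Option S → Option S → Prop} (hR : IsStrictTotalOrder (Option S) R) :
    ProfWF (Function.update P i R) := by
  intro j
  rcases eq_or_ne j i with rfl | hji
  · rwa [update_self]
  · rw [update_of_ne hji]; exact hP j

variable {C P} [DecidableEq N]

lemma Feasible.update [Finite N] {μ : N → Option S} (hμ : Feasible C μ) {i : N} {s : S}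
    (hvac : {j | μ j = some s}.ncard < C.cap s) : Feasible C (Function.update μ i (some s)) := by
  intro t
  by_cases hts : t = s
  · subst hts
    calc {j | Function.update μ i (some t) j = some t}.ncard
        ≤ (insert i {j | μ j = some t}).ncard := Set.ncard_le_ncard (fun j hj => by
          rcases eq_or_ne j i with rfl | hji
          · exact Set.mem_insert _ _
          · exact Set.mem_insert_of_mem _ (by simpa [update_of_ne hji] using hj))
      _ ≤ {j | μ j = some t}.ncard + 1 := Set.ncard_insert_le _ _
      _ ≤ C.cap t := hvac
  · calc {j | Function.update μ i (some s) j = some t}.ncard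
        ≤ {j | μ j = some t}.ncard := Set.ncard_le_ncard (fun j hj => by
          rcases eq_or_ne j i with rfl | hji
          · simp [Ne.symm hts] at hj
          · simpa [update_of_ne hji] using hj)
      _ ≤ C.cap t := hμ t

lemma IndRat.update (hP : ProfWF P) {μ : N → Option S} (hμ : IndRat P μ) {i : N} {a : Option S}
    (hi : P i a (μ i)) : IndRat P (Function.update μ i a) := by
  intro j
  rcases eq_or_ne j i with rfl | hji
  · rw [update_self]
    exact fun h => hμ j ((hP j).trans _ _ _ h hi)
  · rw [update_of_ne hji]; exact hμ j

lemma NoJustifiedEnvy.update (hP : ProfWF P) {μ : N → Option S} (hμ : NoJustifiedEnvy C P μ)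
    {i : N} {s : S} (hi : P i (some s) (μ i))
    (htop : ∀ j, P j (some s) (μ j) → ¬ C.prio s j i) :
    NoJustifiedEnvy C P (Function.update μ i (some s)) := by
  intro j k t hj hk
  rcases eq_or_ne k i with rfl | hki
  · obtain rfl : t = s := by simpa using hk.symm
    rcases eq_or_ne j k with rfl | hjk
    · exact absurd hj (by simpa using (hP j).irrefl _)
    · rw [update_of_ne hjk] at hj
      exact htop j hj
  · rw [update_of_ne hki] at hk
    rcases eq_or_ne j i with rfl | hji
    · rw [update_self] at hj
      exact hμ j k t ((hP j).trans _ _ _ hj hi) hk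
    · rw [update_of_ne hji] at hj
      exact hμ j k t hj hk

end Existence

section Potential

variable {N S : Type*} [Fintype N] (P : Profile N S)

noncomputable def rankSum (μ : N → Option S) : ℕ := ∑ i, {a | P i a (μ i)}.ncard

variable {P} [DecidableEq N] [Finite S]

lemma rankSum_update_lt (hP : ProfWF P) {μ : N → Option S} {i : N} {a : Option S}
    (hi : P i a (μ i)) : rankSum P (Function.update μ i a) < rankSum P μ := by
  have hsub : {b | P i b a} ⊂ {b | P i b (μ i)} :=
    Set.ssubset_iff_subset_ne.2 ⟨fun b hb => (hP i).trans _ _ _ hb hi,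
      fun h => (hP i).irrefl a (h ▸ hi : a ∈ {b | P i b a})⟩
  refine Finset.sum_lt_sum (fun j _ => ?_) ⟨i, Finset.mem_univ _, ?_⟩
  · rcases eq_or_ne j i with rfl | hji
    · rw [update_self]; exact Set.ncard_le_ncard hsub.subset
    · rw [update_of_ne hji]
  · rw [update_self]; exact Set.ncard_lt_ncard hsub

end Potential

theorem exists_isStable {N S : Type*} [Fintype N] [Finite S] (C : SchoolContext N S)
    {P : Profile N S} (hP : ProfWF P) : ∃ μ, IsStable C P μ := by
  classical
  obtain ⟨μ, ⟨hfeas, hir, hnje⟩, hmin⟩ :=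
    (measure (rankSum P)).wf.has_min {μ | IsFair C P μ} ⟨_, isFair_unassigned C P hP⟩
  refine ⟨μ, hfeas, hir, fun i s hi => ?_, hnje⟩
  by_contra! hvac
  have := C.prio_sto s
  obtain ⟨k, hk, htop⟩ := (Finite.wellFounded_of_trans_of_irrefl (C.prio s)).has_min
    {j | P j (some s) (μ j)} ⟨i, hi⟩
  exact hmin _ ⟨hfeas.update hvac, hir.update hP hk, hnje.update hP hk htop⟩
    (rankSum_update_lt hP hk)

section ListPref

variable {α : Type*} [DecidableEq α]

def listPref (l : List α) (a b : α) : Prop := l.idxOf a < l.idxOf b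

instance (l : List α) : DecidableRel (listPref l) := fun _ _ => Nat.decLt _ _

lemma isStrictTotalOrder_listPref {l : List α} (hl : ∀ a, a ∈ l) :
    IsStrictTotalOrder α (listPref l) where
  trichotomous a _ hab hba := (List.idxOf_inj (hl a)).1 (le_antisymm (not_lt.1 hba) (not_lt.1 hab))
  irrefl a := lt_irrefl (l.idxOf a)
  trans _ _ _ := lt_trans

end ListPref

def exampleContext : SchoolContext (Fin 3) (Fin 2) where
  prio s i j := if s = 0 then i < j else j < i
  prio_sto s := by split_ifs <;> infer_instance
  cap s := if s = 0 then 2 else 1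
  cap_pos s := by split_ifs <;> decide

lemma SchoolContext.eq_exampleContext (C : SchoolContext (Fin 3) (Fin 2))
    (hcap0 : C.cap 0 = 2) (hcap1 : C.cap 1 = 1)
    (hp0 : ∀ i j, C.prio 0 i j ↔ i < j)
    (hp1 : ∀ i j, C.prio 1 i j ↔ j < i) : C = exampleContext := by
  obtain ⟨prio, _, cap, _⟩ := C
  have hprio : prio = exampleContext.prio := by
    ext s i j; fin_cases s
    exacts [hp0 i j, hp1 i j]
  have hcap : cap = exampleContext.cap := by
    ext s; fin_cases s
    exacts [hcap0, hcap1]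
  subst hprio hcap
  rfl

-- Students `0, 1, 2` and schools `0, 1` are the paper's students `1, 2, 3` and schools `s₁, s₂`.
abbrev prefBar : Profile (Fin 3) (Fin 2) := fun i =>
  listPref (![[some 0, some 1, none], [some 1, some 0, none], [some 0, some 1, none]] i)


def schoolOptimalBar : Fin 3 → Option (Fin 2) := ![some 0, some 0, some 1]
def studentOptimalBar : Fin 3 → Option (Fin 2) := ![some 0, some 1, some 0]

lemma profWF_prefBar : ProfWF prefBar := by
  intro i
  fin_cases i <;> exact isStrictTotalOrder_listPref (by decide)

lemma update_prefBar_ne {i : Fin 3} {R : Option (Fin 2) → Option (Fin 2) → Prop}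
    {a b : Option (Fin 2)} (hR : R a b) (hbar : ¬ prefBar i a b) :
    Function.update prefBar i R ≠ prefBar :=
  Function.update_ne_self_iff.2 fun h => hbar (h ▸ hR)

lemma isStable_schoolOptimalBar : IsStable exampleContext prefBar schoolOptimalBar := by
  simp +decide [IsStable, Feasible, IndRat, NonWasteful, NoJustifiedEnvy, Fin.forall_fin_succ,
    exampleContext, schoolOptimalBar, Set.ncard_eq_toFinset_card']

lemma isStable_studentOptimalBar_update_zero :
    IsStable exampleContext (Function.update prefBar 0 (listPref [some 1, some 0, none]))
      studentOptimalBar := by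
  simp +decide [IsStable, Feasible, IndRat, NonWasteful, NoJustifiedEnvy, Fin.forall_fin_succ,
    exampleContext, studentOptimalBar, Set.ncard_eq_toFinset_card', Function.update_apply]

lemma isStable_studentOptimalBar_update_one :
    IsStable exampleContext (Function.update prefBar 1 (listPref [some 1, none, some 0]))
      studentOptimalBar := by
  simp +decide [IsStable, Feasible, IndRat, NonWasteful, NoJustifiedEnvy, Fin.forall_fin_succ,
    exampleContext, studentOptimalBar, Set.ncard_eq_toFinset_card', Function.update_apply]

-- Preferring `studentOptimalBar` wherever it is stable makes the mechanism agree with DA at both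
-- deviations from `prefBar` used below.
open Classical in
noncomputable def exampleMechanism (P : Profile (Fin 3) (Fin 2)) : Fin 3 → Option (Fin 2) :=
  if P = prefBar then schoolOptimalBar
  else if IsStable exampleContext P studentOptimalBar then studentOptimalBar
  else Classical.epsilon (IsStable exampleContext P)

lemma exampleMechanism_prefBar : exampleMechanism prefBar = schoolOptimalBar :=
  if_pos rfl

lemma exampleMechanism_of_isStable {P : Profile (Fin 3) (Fin 2)} (hP : P ≠ prefBar)
    (h : IsStable exampleContext P studentOptimalBar) : exampleMechanism P = studentOptimalBar := by
  rw [exampleMechanism, if_neg hP, if_pos h]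

lemma isStable_exampleMechanism {P : Profile (Fin 3) (Fin 2)} (hP : ProfWF P) :
    IsStable exampleContext P (exampleMechanism P) := by
  unfold exampleMechanism
  split_ifs with hbar hν
  · exact hbar ▸ isStable_schoolOptimalBar
  · exact hν
  · exact Classical.epsilon_spec (exists_isStable exampleContext hP)

lemma not_locallyNonBossy_exampleMechanism : ¬ LocallyNonBossy exampleMechanism := by
  intro h
  have hdev := exampleMechanism_of_isStable (update_prefBar_ne (a := some 1) (b := some 0)
    (by decide) (by decide)) isStable_studentOptimalBar_update_zero
  have := h prefBar profWF_prefBar 0 (listPref [some 1, some 0, none])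
    (profWF_prefBar.update 0 (isStrictTotalOrder_listPref (by decide))) (some 0)
    (by rw [exampleMechanism_prefBar]; rfl) (by rw [hdev]; rfl)
  rw [exampleMechanism_prefBar, hdev, Set.ext_iff] at this
  exact absurd (this 1) (by decide)

lemma not_strategyProof_exampleMechanism : ¬ StrategyProof exampleMechanism := by
  intro h
  have hdev := exampleMechanism_of_isStable (update_prefBar_ne (a := none) (b := some 0)
    (by decide) (by decide)) isStable_studentOptimalBar_update_one
  apply h prefBar profWF_prefBar 1 (listPref [some 1, none, some 0])
    (profWF_prefBar.update 1 (isStrictTotalOrder_listPref (by decide)))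
  rw [exampleMechanism_prefBar, hdev]
  decide

/-- Local non-bossiness and stability are independent: in the three-student, two-school
context with capacities (2,1) and priorities `s₁ : 1,2,3` and `s₂ : 3,2,1`, there is a
stable mechanism that is neither locally non-bossy nor strategy-proof. -/
theorem stmt13 (C : SchoolContext (Fin 3) (Fin 2))
    (hcap0 : C.cap 0 = 2) (hcap1 : C.cap 1 = 1)
    (hp0 : ∀ i j, C.prio 0 i j ↔ i < j)
    (hp1 : ∀ i j, C.prio 1 i j ↔ j < i) :
    ∃ Ω : Profile (Fin 3) (Fin 2) → (Fin 3 → Option (Fin 2)),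
      (∀ P, ProfWF P → IsStable C P (Ω P)) ∧
        ¬ LocallyNonBossy Ω ∧ ¬ StrategyProof Ω := by
  obtain rfl := C.eq_exampleContext hcap0 hcap1 hp0 hp1
  exact ⟨exampleMechanism, fun _ => isStable_exampleMechanism,
    not_locallyNonBossy_exampleMechanism, not_strategyProof_exampleMechanism⟩
end

section
/- Local non-bossiness does not imply local group non-bossiness: there exists a locally non-bossy mechanism for which a coalition of two students assigned to the same school can jointly misreport, each keeping her assignment, while changing the set of students assigned to that school. -/
/-!
`Ω` depends only on whether students `0` and `1` share a top school, and on which one. A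
unilateral deviation leaves one of these two students untouched, so it cannot move `Ω` between
its two non-trivial branches; and a deviator keeping her assignment cannot move it into or out of
the branch where nobody is assigned (a deviation of student `2` changes nothing at all). So `Ω`
is not affected by such a deviation. Students `0` and `1` deviating together, however, can switch
from the first branch to the second, which moves student `2` from `s₂` to `s₁`.
-/

def TopChoice {N S : Type*} (P : Profile N S) (i : N) (s : S) : Prop :=
  ∀ x, x ≠ some s → P i (some s) x

theorem TopChoice.unique {N S : Type*} {P : Profile N S} {i : N} [IsStrictOrder _ (P i)]
    {s t : S} (hs : TopChoice P i s) (ht : TopChoice P i t) : s = t := by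
  by_contra hst
  exact irrefl _ (_root_.trans (hs (some t) (by simpa [eq_comm] using hst))
    (ht (some s) (by simpa using hst)))

theorem TopChoice.of_apply_eq {N S : Type*} {P Q : Profile N S} {i : N} {s : S}
    (h : TopChoice P i s) (hPQ : P i = Q i) : TopChoice Q i s :=
  fun x hx => hPQ ▸ h x hx

theorem updateGroup_of_mem {N S : Type*} (P P' : Profile N S) {Cs : Set N} {i : N}
    (hi : i ∈ Cs) : updateGroup P Cs P' i = P' i := by
  funext a b
  simp [updateGroup, hi]

theorem updateGroup_of_notMem {N S : Type*} (P P' : Profile N S) {Cs : Set N} {i : N}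
    (hi : i ∉ Cs) : updateGroup P Cs P' i = P i := by
  funext a b
  simp [updateGroup, hi]

theorem ProfWF.updateGroup {N S : Type*} {P P' : Profile N S} (hP : ProfWF P)
    (hP' : ProfWF P') (Cs : Set N) : ProfWF (updateGroup P Cs P') := by
  intro i
  by_cases hi : i ∈ Cs
  · rw [updateGroup_of_mem P P' hi]; exact hP' i
  · rw [updateGroup_of_notMem P P' hi]; exact hP i

namespace SchoolChoiceExample

def BothTop (P : Profile (Fin 3) (Fin 2)) (s : Fin 2) : Prop :=
  TopChoice P 0 s ∧ TopChoice P 1 s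

open Classical in
/-- The mechanism `Ω`, with schools `s₁, s₂` as `0, 1` and students `1, 2, 3` as `0, 1, 2`. -/
noncomputable def mechanism (P : Profile (Fin 3) (Fin 2)) : Fin 3 → Option (Fin 2) :=
  if BothTop P 0 then ![some 0, some 0, some 1]
  else if BothTop P 1 then fun _ => some 0
  else fun _ => none

theorem mechanism_congr {P Q : Profile (Fin 3) (Fin 2)} (h : BothTop P = BothTop Q) :
    mechanism P = mechanism Q := by
  rw [mechanism, mechanism, h]

theorem eq_two_of_mechanism_eq_some_one {P : Profile (Fin 3) (Fin 2)} {i : Fin 3}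
    (h : mechanism P i = some 1) : i = 2 := by
  unfold mechanism at h
  split_ifs at h <;> fin_cases i <;> simp_all

theorem mechanism_eq_some_zero_iff {P : Profile (Fin 3) (Fin 2)} {i : Fin 3} (hi : i ≠ 2) :
    mechanism P i = some 0 ↔ ∃ s, BothTop P s := by
  unfold mechanism
  split_ifs <;> fin_cases i <;> simp_all [Fin.exists_fin_two]

theorem mechanism_feasible (C : SchoolContext (Fin 3) (Fin 2)) (hcap : 3 ≤ C.cap 0)
    (P : Profile (Fin 3) (Fin 2)) : Feasible C (mechanism P) := by
  intro s
  fin_cases s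
  · exact (Set.ncard_le_card _).trans (by simpa using hcap)
  · calc {i | mechanism P i = some 1}.ncard ≤ ({2} : Set (Fin 3)).ncard :=
          Set.ncard_le_ncard fun i => eq_two_of_mechanism_eq_some_one
      _ ≤ C.cap 1 := by simpa using C.cap_pos 1

theorem BothTop.topChoice {P : Profile (Fin 3) (Fin 2)} {s : Fin 2} (h : BothTop P s)
    {j : Fin 3} (hj : j ≠ 2) : TopChoice P j s := by
  fin_cases j
  exacts [h.1, h.2, absurd rfl hj]

theorem BothTop.eq_of_apply_eq {P Q : Profile (Fin 3) (Fin 2)} (hQ : ProfWF Q) {j : Fin 3}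
    (hj : j ≠ 2) (hPQ : P j = Q j) {s t : Fin 2} (hs : BothTop P s) (ht : BothTop Q t) :
    s = t :=
  have := hQ j
  ((hs.topChoice hj).of_apply_eq hPQ).unique (ht.topChoice hj)

theorem bothTop_update_two (P : Profile (Fin 3) (Fin 2))
    (R : Option (Fin 2) → Option (Fin 2) → Prop) :
    BothTop (Function.update P 2 R) = BothTop P := by
  funext s
  simp [BothTop, TopChoice, Function.update_of_ne]

theorem mechanism_update_eq {P : Profile (Fin 3) (Fin 2)} (hP : ProfWF P) {i : Fin 3}
    {R : Option (Fin 2) → Option (Fin 2) → Prop} (hQ : ProfWF (Function.update P i R))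
    (h : mechanism (Function.update P i R) i = mechanism P i) :
    mechanism (Function.update P i R) = mechanism P := by
  apply mechanism_congr
  by_cases hi : i = 2
  · subst hi
    exact bothTop_update_two P R
  obtain ⟨j, hj, hji⟩ : ∃ j : Fin 3, j ≠ 2 ∧ j ≠ i := by
    fin_cases i <;> simp_all [Fin.exists_fin_succ]
  have hPQ : Function.update P i R j = P j := Function.update_of_ne hji R P
  have hex : (∃ t, BothTop (Function.update P i R) t) ↔ ∃ t, BothTop P t := by
    rw [← mechanism_eq_some_zero_iff hi, ← mechanism_eq_some_zero_iff hi, h]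
  funext s
  refine propext ⟨fun hs => ?_, fun hs => ?_⟩
  · obtain ⟨t, ht⟩ := hex.mp ⟨s, hs⟩
    rwa [BothTop.eq_of_apply_eq hP hj hPQ hs ht]
  · obtain ⟨t, ht⟩ := hex.mpr ⟨s, hs⟩
    rwa [BothTop.eq_of_apply_eq hQ hj hPQ.symm hs ht]

theorem locallyNonBossy_mechanism : LocallyNonBossy mechanism :=
  fun _ hP _ _ hQ _ h h' => by rw [mechanism_update_eq hP hQ (h'.trans h.symm)]

/-- Lower is better: school `t`, then the other school, then the outside option. -/
def rankWithTop (t : Fin 2) : Option (Fin 2) → ℕ :=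
  fun a => a.elim 2 fun s => if s = t then 0 else 1

theorem rankWithTop_injective (t : Fin 2) : (rankWithTop t).Injective := by
  fin_cases t <;> decide

def favoring (t : Fin 2) : Profile (Fin 3) (Fin 2) :=
  fun _ a b => rankWithTop t a < rankWithTop t b

theorem profWF_favoring (t : Fin 2) : ProfWF (favoring t) :=
  fun _ => (rankWithTop_injective t).isStrictTotalOrder_onFun (· < ·)

theorem topChoice_favoring (t : Fin 2) (i : Fin 3) : TopChoice (favoring t) i t := by
  intro x hx
  match x with
  | none => simp [favoring, rankWithTop]
  | some s => simp_all [favoring, rankWithTop]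

theorem not_locallyGroupNonBossy_mechanism : ¬ LocallyGroupNonBossy mechanism := by
  intro h
  have hQ_wf : ProfWF (updateGroup (favoring 0) {0, 1} (favoring 1)) :=
    (profWF_favoring 0).updateGroup (profWF_favoring 1) _
  have hQ_top : BothTop (updateGroup (favoring 0) {0, 1} (favoring 1)) 1 :=
    ⟨(topChoice_favoring 1 0).of_apply_eq (updateGroup_of_mem _ _ (by simp)).symm,
      (topChoice_favoring 1 1).of_apply_eq (updateGroup_of_mem _ _ (by simp)).symm⟩
  have hP : mechanism (favoring 0) = ![some 0, some 0, some 1] :=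
    if_pos ⟨topChoice_favoring 0 0, topChoice_favoring 0 1⟩
  have hQ : mechanism (updateGroup (favoring 0) {0, 1} (favoring 1)) = fun _ => some 0 := by
    have := hQ_wf 0
    have hQ_not_top : ¬ BothTop (updateGroup (favoring 0) {0, 1} (favoring 1)) 0 :=
      fun h0 => zero_ne_one (h0.1.unique hQ_top.1)
    rw [mechanism, if_neg hQ_not_top, if_pos hQ_top]
  have hsets := h (some 0) (favoring 0) {0, 1} (favoring 1) (profWF_favoring 0) hQ_wf
    (by simp [hP]) (by simp [hP, hQ])
  rw [hP, hQ] at hsets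
  simpa using congrArg ((2 : Fin 3) ∈ ·) hsets

end SchoolChoiceExample

open SchoolChoiceExample in
theorem stmt15_general (C : SchoolContext (Fin 3) (Fin 2))
    (hcap0 : C.cap 0 = 3) :
    ∃ Ω : Profile (Fin 3) (Fin 2) → (Fin 3 → Option (Fin 2)),
      (∀ P, ProfWF P → Feasible C (Ω P)) ∧
        LocallyNonBossy Ω ∧ ¬ LocallyGroupNonBossy Ω :=
  ⟨mechanism, fun P _ => mechanism_feasible C hcap0.ge P, locallyNonBossy_mechanism,
    not_locallyGroupNonBossy_mechanism⟩

/-- Local non-bossiness does not imply local group non-bossiness: in the three-student,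
two-school context with capacities (3,1), there is a locally non-bossy mechanism that
is not locally group non-bossy. -/
theorem stmt15 (C : SchoolContext (Fin 3) (Fin 2))
    (hcap0 : C.cap 0 = 3) (hcap1 : C.cap 1 = 1) :
    ∃ Ω : Profile (Fin 3) (Fin 2) → (Fin 3 → Option (Fin 2)),
      (∀ P, ProfWF P → Feasible C (Ω P)) ∧
        LocallyNonBossy Ω ∧ ¬ LocallyGroupNonBossy Ω :=
  stmt15_general C hcap0
end

section
/- The school-median stable mechanism is locally bossy: in a four-student, two-school example, a student can change her report, remain at the same school, and change her schoolmates under the school-median stable matching. -/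
/-!
Ranking outcomes by natural numbers turns stability and the median conditions into decidable
finite statements. With truthful reports the stable matchings are the student-optimal
`(s₂, s₂, s₁, s₁)`, `(s₁, s₂, s₁, s₂)` and the school-optimal `(s₁, s₁, s₂, s₂)`, and only the
middle one meets the median conditions of every student. After student 1 ranks `s₁` first, only
the last two stay stable, and the median is the school-optimal one. Student 1 is at `s₁` both
times, but her schoolmate changes from student 3 to student 2.
-/

open Finset Function

section RankProfiles

variable {N S : Type*}

def rankProfile (r : N → Option S → ℕ) : Profile N S := fun i a b => r i a < r i b

instance (r : N → Option S → ℕ) (i : N) : DecidableRel (rankProfile r i) :=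
  fun a b => Nat.decLt (r i a) (r i b)

theorem profWF_rankProfile {r : N → Option S → ℕ} (hr : ∀ i, Injective (r i)) :
    ProfWF (rankProfile r) := fun i =>
  { trichotomous := fun a b hab hba => hr i (by
      by_contra h
      rcases Nat.lt_or_gt_of_ne h with h | h
      exacts [hab h, hba h])
    irrefl := fun _ => lt_irrefl _
    trans := fun _ _ _ => lt_trans }

theorem rankProfile_update [DecidableEq N] (r : N → Option S → ℕ) (i : N)
    (f : Option S → ℕ) :
    rankProfile (update r i f) = update (rankProfile r) i (fun a b => f a < f b) := by
  funext j a b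
  by_cases h : j = i
  · subst h; simp [rankProfile]
  · simp [rankProfile, h]

end RankProfiles

section FiniteStability

variable {N S : Type*} [Fintype N] [DecidableEq S]

/-- Stability when priorities are given by ranks `ρ s` (lower is better), with the
cardinalities computed as `Finset.card`, so that it is decidable. -/
def IsStableRank (cap : S → ℕ) (ρ : S → N → ℕ) (r : N → Option S → ℕ)
    (μ : N → Option S) : Prop :=
  (∀ s, #{i | μ i = some s} ≤ cap s) ∧ (∀ i, ¬ r i none < r i (μ i)) ∧
    (∀ i s, r i (some s) < r i (μ i) → cap s ≤ #{j | μ j = some s}) ∧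
    ∀ i j s, r i (some s) < r i (μ i) → μ j = some s → ¬ ρ s i < ρ s j

instance [Fintype S] (cap : S → ℕ) (ρ : S → N → ℕ) (r : N → Option S → ℕ) :
    DecidablePred (IsStableRank cap ρ r) :=
  fun _ => by unfold IsStableRank; infer_instance

def stableMatchings [DecidableEq N] [Fintype S] (cap : S → ℕ) (ρ : S → N → ℕ)
    (r : N → Option S → ℕ) : Finset (N → Option S) :=
  {μ | IsStableRank cap ρ r μ}

theorem isStable_rankProfile_iff {C : SchoolContext N S} {cap : S → ℕ} {ρ : S → N → ℕ}
    (hcap : ∀ s, C.cap s = cap s) (hprio : ∀ s i j, C.prio s i j ↔ ρ s i < ρ s j)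
    (r : N → Option S → ℕ) (μ : N → Option S) :
    IsStable C (rankProfile r) μ ↔ IsStableRank cap ρ r μ := by
  have hcard : ∀ s, {i | μ i = some s}.ncard = #{i | μ i = some s} := fun s => by
    rw [Set.ncard_eq_toFinset_card', Set.toFinset_ofPred]
  simp only [IsStable, Feasible, IndRat, NonWasteful, NoJustifiedEnvy, IsStableRank,
    rankProfile, hcard, hcap, hprio]

end FiniteStability

section Median

variable {N S : Type*}

def IsMedianAmong (P : Profile N S) [∀ i, DecidableRel (P i)] (M : Finset (N → Option S))
    (μ : N → Option S) : Prop :=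
  ∀ i, #{ν ∈ M | P i (ν i) (μ i)} < #M / 2 + 1 ∧ #M / 2 + 1 ≤ #{ν ∈ M | ¬ P i (μ i) (ν i)}

instance [Fintype N] (P : Profile N S) [∀ i, DecidableRel (P i)] (M : Finset (N → Option S)) :
    DecidablePred (IsMedianAmong P M) :=
  fun _ => by unfold IsMedianAmong; infer_instance

theorem isMedianAmong_of_ncard {C : SchoolContext N S} {P : Profile N S}
    [∀ i, DecidableRel (P i)] {M : Finset (N → Option S)}
    (hM : ∀ μ, IsStable C P μ ↔ μ ∈ M) {m : N → Option S}
    (hm : ∀ i, {μ | IsStable C P μ ∧ P i (μ i) (m i)}.ncard < {μ | IsStable C P μ}.ncard / 2 + 1 ∧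
      {μ | IsStable C P μ}.ncard / 2 + 1 ≤ {μ | IsStable C P μ ∧ ¬ P i (m i) (μ i)}.ncard) :
    IsMedianAmong P M m := by
  have hfilter : ∀ Q : (N → Option S) → Prop, [DecidablePred Q] →
      {μ | IsStable C P μ ∧ Q μ}.ncard = #{μ ∈ M | Q μ} := fun Q _ => by
    rw [← Set.ncard_coe_finset, coe_filter]
    simp only [hM]
  have hall : {μ | IsStable C P μ}.ncard = #M := by
    simpa using hfilter (fun _ => True)
  intro i
  simpa only [hfilter, hall] using hm i

theorem eq_of_unique_isMedianAmong [Fintype N] [DecidableEq N] [Fintype S] [DecidableEq S]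
    {C : SchoolContext N S} {cap : S → ℕ} {ρ : S → N → ℕ} (hcap : ∀ s, C.cap s = cap s)
    (hprio : ∀ s i j, C.prio s i j ↔ ρ s i < ρ s j)
    {SM : Profile N S → (N → Option S)}
    (hSM : ∀ P, ProfWF P → IsStable C P (SM P) ∧ ∀ i,
      {μ | IsStable C P μ ∧ P i (μ i) (SM P i)}.ncard < {μ | IsStable C P μ}.ncard / 2 + 1 ∧
        {μ | IsStable C P μ}.ncard / 2 + 1 ≤
          {μ | IsStable C P μ ∧ ¬ P i (SM P i) (μ i)}.ncard)
    {r : N → Option S → ℕ} (hr : ∀ i, Injective (r i)) {μ₀ : N → Option S}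
    (hμ₀ : ∀ μ ∈ stableMatchings cap ρ r,
      IsMedianAmong (rankProfile r) (stableMatchings cap ρ r) μ → μ = μ₀) :
    SM (rankProfile r) = μ₀ := by
  have hM : ∀ μ, IsStable C (rankProfile r) μ ↔ μ ∈ stableMatchings cap ρ r := fun μ => by
    simp [stableMatchings, isStable_rankProfile_iff hcap hprio]
  obtain ⟨hstable, hmedian⟩ := hSM _ (profWF_rankProfile hr)
  exact hμ₀ _ ((hM _).1 hstable) (isMedianAmong_of_ncard hM hmedian)

end Median

section Example

def schoolRank (first : Fin 2) : Option (Fin 2) → ℕ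
  | none => 2
  | some s => if s = first then 0 else 1

theorem schoolRank_injective (first : Fin 2) : Injective (schoolRank first) := by
  revert first; decide

def examplePrio : Fin 2 → Fin 4 → ℕ := ![![1, 0, 2, 3], ![3, 2, 0, 1]]

def truthfulRanks : Fin 4 → Option (Fin 2) → ℕ :=
  ![schoolRank 1, schoolRank 1, schoolRank 0, schoolRank 0]

def deviatedRanks : Fin 4 → Option (Fin 2) → ℕ := update truthfulRanks 0 (schoolRank 0)

theorem truthfulRanks_injective (i : Fin 4) : Injective (truthfulRanks i) := by
  fin_cases i <;> exact schoolRank_injective _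

theorem deviatedRanks_injective (i : Fin 4) : Injective (deviatedRanks i) := by
  fin_cases i <;> exact schoolRank_injective _

def medianTruthful : Fin 4 → Option (Fin 2) := ![some 0, some 1, some 0, some 1]

def medianDeviated : Fin 4 → Option (Fin 2) := ![some 0, some 0, some 1, some 1]

theorem medianTruthful_unique :
    ∀ μ ∈ stableMatchings (fun _ => 2) examplePrio truthfulRanks,
      IsMedianAmong (rankProfile truthfulRanks)
        (stableMatchings (fun _ => 2) examplePrio truthfulRanks) μ → μ = medianTruthful := by
  decide

theorem medianDeviated_unique :
    ∀ μ ∈ stableMatchings (fun _ => 2) examplePrio deviatedRanks,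
      IsMedianAmong (rankProfile deviatedRanks)
        (stableMatchings (fun _ => 2) examplePrio deviatedRanks) μ → μ = medianDeviated := by
  decide

end Example

/-- The school-median stable mechanism is locally bossy. Here `SM` is the school-median
stable mechanism: for each well-formed profile it outputs a stable matching assigning
each student her `(k/2 + 1)`-th (weakly) best assignment among the `k` stable
matchings. In the four-student, two-school instance with capacities (2,2) and
priorities `s₁ : 2,1,3,4` and `s₂ : 3,4,2,1`, it is not locally non-bossy. -/
theorem stmt19 (C : SchoolContext (Fin 4) (Fin 2))
    (hcap0 : C.cap 0 = 2) (hcap1 : C.cap 1 = 2)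
    (hp0 : ∀ i j, C.prio 0 i j ↔
      (![1, 0, 2, 3] : Fin 4 → ℕ) i < (![1, 0, 2, 3] : Fin 4 → ℕ) j)
    (hp1 : ∀ i j, C.prio 1 i j ↔
      (![3, 2, 0, 1] : Fin 4 → ℕ) i < (![3, 2, 0, 1] : Fin 4 → ℕ) j)
    (SM : Profile (Fin 4) (Fin 2) → (Fin 4 → Option (Fin 2)))
    (hSM : ∀ P, ProfWF P → IsStable C P (SM P) ∧ ∀ i,
      {μ | IsStable C P μ ∧ P i (μ i) (SM P i)}.ncard <
          {μ | IsStable C P μ}.ncard / 2 + 1 ∧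
        {μ | IsStable C P μ}.ncard / 2 + 1 ≤
          {μ | IsStable C P μ ∧ ¬ P i (SM P i) (μ i)}.ncard) :
    ¬ LocallyNonBossy SM := by
  have hcap : ∀ s, C.cap s = 2 := fun s => by fin_cases s <;> assumption
  have hprio : ∀ s i j, C.prio s i j ↔ examplePrio s i < examplePrio s j := fun s i j => by
    fin_cases s
    exacts [hp0 i j, hp1 i j]
  have hTruthful : SM (rankProfile truthfulRanks) = medianTruthful :=
    eq_of_unique_isMedianAmong hcap hprio hSM truthfulRanks_injective medianTruthful_unique
  have hDeviated : SM (rankProfile deviatedRanks) = medianDeviated :=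
    eq_of_unique_isMedianAmong hcap hprio hSM deviatedRanks_injective medianDeviated_unique
  have hupdate : update (rankProfile truthfulRanks) 0 (rankProfile deviatedRanks 0) =
      rankProfile deviatedRanks := by
    rw [deviatedRanks, rankProfile_update]
    rfl
  intro hNonBossy
  have hschool := hNonBossy _ (profWF_rankProfile truthfulRanks_injective) 0
    (rankProfile deviatedRanks 0) (hupdate ▸ profWF_rankProfile deviatedRanks_injective) (some 0)
    (by rw [hTruthful]; rfl) (by rw [hupdate, hDeviated]; rfl)
  rw [hupdate, hTruthful, hDeviated] at hschool
  have hmem : (2 : Fin 4) ∈ {j | medianDeviated j = some 0} := hschool ▸ rfl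
  exact absurd hmem (by decide)
end
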